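/- arXiv:1108.3819 — 2 statements merged into one kernel-verified Lean document; each statement's English description precedes it below -/
import Mathlib

section
/- Let n ≥ 2 and let α₁,...,αₙ be integers with |αᵢ| ≤ B for some real B ≥ 1. Then there exist integers z₁,...,zₙ, not all zero, with |zᵢ| ≤ (nB)^(1/(n-1)) for all i, such that α₁z₁ + α₂z₂ + ... + αₙzₙ = 0. -/
/-!
Pigeonhole. Put `M = ⌊(nB)^(1/(n-1))⌋`. On the box `{0, …, M}ⁿ` the linear form `y ↦ ∑ αᵢ yᵢ`
takes values in an interval containing `M ∑ |αᵢ| + 1 ≤ nBM + 1` integers, while the box has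
`(M + 1)ⁿ` points, and `(M + 1)ⁿ⁻¹ > nB` by the choice of `M`. So two distinct points of the box
have the same image, and their difference is the required `z`.
-/

open Finset

theorem mul_mem_Icc_negPart_posPart {a y M : ℤ} (hy : y ∈ Icc 0 M) :
    a * y ∈ Icc (-(a⁻ * M)) (a⁺ * M) := by
  rw [mem_Icc] at *
  rcases le_total 0 a with ha | ha
  · rw [posPart_of_nonneg ha, negPart_of_nonneg ha]
    constructor <;> nlinarith
  · rw [posPart_of_nonpos ha, negPart_of_nonpos ha]
    constructor <;> nlinarith

section

variable {ι : Type*} [Fintype ι]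

theorem sum_mul_mem_Icc_negPart_posPart (α y : ι → ℤ) {M : ℤ}
    (hy : ∀ i, y i ∈ Icc 0 M) :
    ∑ i, α i * y i ∈ Icc (-∑ i, (α i)⁻ * M) (∑ i, (α i)⁺ * M) := by
  have h i := mem_Icc.1 (mul_mem_Icc_negPart_posPart (a := α i) (hy i))
  rw [mem_Icc, neg_le, ← sum_neg_distrib]
  exact ⟨sum_le_sum fun i _ => neg_le.1 (h i).1, sum_le_sum fun i _ => (h i).2⟩

theorem card_Icc_negPart_posPart (α : ι → ℤ) (M : ℤ) :
    #(Icc (-∑ i, (α i)⁻ * M) (∑ i, (α i)⁺ * M)) = ((∑ i, |α i|) * M + 1).toNat := by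
  rw [Int.card_Icc]
  simp only [← posPart_add_negPart, sum_add_distrib, add_mul, sum_mul]
  congr 1
  ring

theorem exists_ne_zero_abs_le_sum_mul_eq_zero (α : ι → ℤ) (M : ℕ)
    (h : (∑ i, |α i|) * M + 1 < (M + 1) ^ Fintype.card ι) :
    ∃ z : ι → ℤ, z ≠ 0 ∧ (∀ i, |z i| ≤ M) ∧ ∑ i, α i * z i = 0 := by
  classical
  have hcard : #(Icc (-∑ i, (α i)⁻ * M) (∑ i, (α i)⁺ * M)) <
      #(Fintype.piFinset fun _ : ι => Icc (0 : ℤ) M) := by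
    rw [card_Icc_negPart_posPart, Fintype.card_piFinset, prod_const, card_univ, Int.card_Icc,
      sub_zero, Int.toNat_natCast_add_one, Int.toNat_lt' (by positivity)]
    exact_mod_cast h
  obtain ⟨y, hy, y', hy', hne, heq⟩ := exists_ne_map_eq_of_card_lt_of_maps_to hcard
    fun y hy => sum_mul_mem_Icc_negPart_posPart α y (Fintype.mem_piFinset.1 hy)
  refine ⟨y - y', sub_ne_zero.2 hne, fun i => ?_, ?_⟩
  · obtain ⟨hy0, hyM⟩ := mem_Icc.1 (Fintype.mem_piFinset.1 hy i)
    obtain ⟨hy'0, hy'M⟩ := mem_Icc.1 (Fintype.mem_piFinset.1 hy' i)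
    exact abs_sub_le_of_nonneg_of_le hy0 hyM hy'0 hy'M
  · simp only [Pi.sub_apply, mul_sub, sum_sub_distrib, heq, sub_self]

end

theorem lt_floor_rpow_inv_add_one_pow {x : ℝ} (hx : 0 ≤ x) {k : ℕ} (hk : k ≠ 0) :
    x < (⌊x ^ (k⁻¹ : ℝ)⌋₊ + 1) ^ k := by
  have := Nat.lt_floor_add_one (x ^ (k⁻¹ : ℝ))
  rwa [Real.rpow_inv_lt_iff_of_pos hx (by positivity) (by positivity), Real.rpow_natCast] at this

theorem mul_add_one_lt_pow_succ {A M : ℤ} {k : ℕ} (hA : A < (M + 1) ^ k) (hM : 1 ≤ M) :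
    A * M + 1 < (M + 1) ^ (k + 1) := by
  have hpos : 0 < (M + 1) ^ k := by positivity
  rw [pow_succ]
  nlinarith

/-- Part of Siegel's lemma: given integers `α i` bounded by `B`, there is a
nonzero integer vector `z` with `|z i| ≤ (n*B)^(1/(n-1))` and `∑ α i * z i = 0`. -/
theorem siegel_lemma (n : ℕ) (hn : 2 ≤ n) (B : ℝ) (hB : 1 ≤ B)
    (α : Fin n → ℤ) (hα : ∀ i, (|α i| : ℝ) ≤ B) :
    ∃ z : Fin n → ℤ, z ≠ 0 ∧
      (∀ i, (|z i| : ℝ) ≤ (n * B) ^ ((1 : ℝ) / (n - 1))) ∧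
      ∑ i, α i * z i = 0 := by
  obtain ⟨k, rfl⟩ : ∃ k, n = k + 1 := ⟨n - 1, by omega⟩
  have hexp : (1 : ℝ) / ((k + 1 : ℕ) - 1) = (k : ℝ)⁻¹ := by push_cast; ring
  have hnB : 1 ≤ ((k + 1 : ℕ) : ℝ) * B := by push_cast; nlinarith [(k.cast_nonneg : (0 : ℝ) ≤ k)]
  rw [hexp]
  set M := ⌊(((k + 1 : ℕ) : ℝ) * B) ^ (k⁻¹ : ℝ)⌋₊
  have hM : 1 ≤ M := Nat.one_le_floor_iff _ |>.2 (Real.one_le_rpow hnB (by positivity))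
  have hsum : ∑ i, (|α i| : ℝ) ≤ (k + 1 : ℕ) * B := by
    simpa using sum_le_sum fun i (_ : i ∈ univ) => hα i
  have hA : ∑ i, |α i| < ((M : ℤ) + 1) ^ k := by
    exact_mod_cast hsum.trans_lt (lt_floor_rpow_inv_add_one_pow (by linarith) (by omega))
  obtain ⟨z, hz, hzM, hαz⟩ := exists_ne_zero_abs_le_sum_mul_eq_zero α M
    (by simpa using mul_add_one_lt_pow_succ hA (by exact_mod_cast hM))
  refine ⟨z, hz, fun i => ?_, hαz⟩
  calc (|z i| : ℝ) ≤ M := by exact_mod_cast hzM i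
    _ ≤ _ := Nat.floor_le (by positivity)
end

section
/- Let μ ∈ (0,1] and R ≥ 1, and let ℛ be a finite set of positive integers ≤ R. Then the number of sextuples (r₁, r₂, h₁, h₂, h₃, h₄) with r₁, r₂ ∈ ℛ, h₁,...,h₄ nonzero integers with |hᵢ| ≤ 1/μ, satisfying r₂(h₁ − h₃) = r₁(h₂ − h₄), is at most (#ℛ)²·(2/μ)² (solutions with h₁ = h₃ and h₂ = h₄, trivially bounded) plus (#ℛ)·(2/μ)³·max_{1 ≤ m ≤ 2R/μ} d(m)², where d is the divisor function. -/
/-!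
Fix `(r₂, h₁, h₃)` and count the `(r₁, h₂, h₄)` with `r₁ (h₂ - h₄) = n := r₂ (h₁ - h₃)`.
If `h₁ = h₃` then `n = 0` forces `h₄ = h₂`, leaving `#ℛ #H` choices. Otherwise `n ≠ 0`, so `r₁`
is one of the divisors of `|n| ≤ 2R/μ`, and `h₄ = h₂ - n / r₁` is determined by `(r₁, h₂)`.
-/

open scoped Classical

open Finset

def mulSubSolutions (ℛ : Finset ℕ) (H : Finset ℤ) (n : ℤ) : Finset (ℕ × ℤ × ℤ) :=
  (ℛ ×ˢ H ×ˢ H).filter fun x => n = x.1 * (x.2.1 - x.2.2)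

def sextuples (ℛ : Finset ℕ) (H : Finset ℤ) : Finset (ℕ × ℕ × ℤ × ℤ × ℤ × ℤ) :=
  (ℛ ×ˢ ℛ ×ˢ H ×ˢ H ×ˢ H ×ˢ H).filter fun q =>
    (q.2.1 : ℤ) * (q.2.2.1 - q.2.2.2.2.1) = q.1 * (q.2.2.2.1 - q.2.2.2.2.2)

section Counting

variable (ℛ : Finset ℕ) (H : Finset ℤ)

theorem card_mulSubSolutions_zero_le (hpos : ∀ r ∈ ℛ, 0 < r) :
    #(mulSubSolutions ℛ H 0) ≤ #ℛ * #H := by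
  rw [← card_product]
  refine card_le_card_of_injOn (fun x => (x.1, x.2.1)) ?_ ?_
  · intro x hx
    simp only [mulSubSolutions, coe_filter, Set.mem_ofPred_eq, mem_product] at hx
    simp only [coe_product, Set.mem_prod, mem_coe]
    exact ⟨hx.1.1, hx.1.2.1⟩
  · rintro ⟨r, a, b⟩ hx ⟨r', a', b'⟩ hx' h
    simp only [mulSubSolutions, coe_filter, Set.mem_ofPred_eq, mem_product] at hx hx'
    simp only [Prod.mk.injEq] at h ⊢
    obtain ⟨rfl, rfl⟩ := h
    have hr : (r : ℤ) ≠ 0 := by exact_mod_cast (hpos r hx.1.1).ne'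
    have hb := (mul_eq_zero.mp hx.2.symm).resolve_left hr
    have hb' := (mul_eq_zero.mp hx'.2.symm).resolve_left hr
    exact ⟨rfl, rfl, by omega⟩

theorem card_mulSubSolutions_le_of_ne_zero {n : ℤ} (hn : n ≠ 0) :
    #(mulSubSolutions ℛ H n) ≤ #n.natAbs.divisors * #H := by
  rw [← card_product]
  refine card_le_card_of_injOn (fun x => (x.1, x.2.1)) ?_ ?_
  · rintro ⟨r, a, b⟩ hx
    simp only [mulSubSolutions, coe_filter, Set.mem_ofPred_eq, mem_product] at hx
    simp only [coe_product, Set.mem_prod, mem_coe, Nat.mem_divisors]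
    refine ⟨⟨?_, Int.natAbs_ne_zero.mpr hn⟩, hx.1.2.1⟩
    exact Int.natAbs_dvd_natAbs.mpr ⟨a - b, hx.2⟩
  · rintro ⟨r, a, b⟩ hx ⟨r', a', b'⟩ hx' h
    simp only [mulSubSolutions, coe_filter, Set.mem_ofPred_eq, mem_product] at hx hx'
    simp only [Prod.mk.injEq] at h ⊢
    obtain ⟨rfl, rfl⟩ := h
    have hr : (r : ℤ) ≠ 0 := fun h => hn (by rw [hx.2, h, zero_mul])
    have := mul_left_cancel₀ hr (hx.2.symm.trans hx'.2)
    exact ⟨rfl, rfl, by omega⟩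

theorem card_sextuples_le_sum :
    #(sextuples ℛ H) ≤
      ∑ x ∈ ℛ ×ˢ H ×ˢ H, #(mulSubSolutions ℛ H (x.1 * (x.2.1 - x.2.2))) := by
  rw [card_eq_sum_card_fiberwise (f := fun q => (q.2.1, q.2.2.1, q.2.2.2.2.1))]
  · refine sum_le_sum fun x _ => ?_
    refine (card_le_card ?_).trans
      (card_image_le (f := fun y => (y.1, x.1, x.2.1, y.2.1, x.2.2, y.2.2)))
    rintro ⟨r₁, r₂, h₁, h₂, h₃, h₄⟩ hq
    simp only [sextuples, mem_filter, mem_product] at hq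
    obtain ⟨⟨⟨hr₁, -, -, hh₂, -, hh₄⟩, heq⟩, rfl⟩ := hq
    simp only [mem_image, mulSubSolutions, mem_filter, mem_product]
    exact ⟨(r₁, h₂, h₄), ⟨⟨hr₁, hh₂, hh₄⟩, heq⟩, rfl⟩
  · intro q hq
    simp only [sextuples, coe_filter, Set.mem_ofPred_eq, mem_product] at hq
    simp only [coe_product, Set.mem_prod, mem_coe]
    exact ⟨hq.1.2.1, hq.1.2.2.1, hq.1.2.2.2.2.1⟩

theorem card_sextuples_le (hpos : ∀ r ∈ ℛ, 0 < r) (D : ℕ)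
    (hD : ∀ r ∈ ℛ, ∀ a ∈ H, ∀ b ∈ H, a ≠ b → #((r * (a - b)).natAbs.divisors) ≤ D) :
    #(sextuples ℛ H) ≤ #ℛ ^ 2 * #H ^ 2 + #ℛ * #H ^ 3 * D := by
  have hinner : ∀ r ∈ ℛ, ∀ a ∈ H,
      ∑ b ∈ H, #(mulSubSolutions ℛ H (r * (a - b))) ≤ #ℛ * #H + #H * (D * #H) := by
    intro r hr a ha
    rw [← add_sum_erase H _ ha, sub_self, mul_zero]
    gcongr
    · exact card_mulSubSolutions_zero_le ℛ H hpos
    · refine (sum_le_card_nsmul _ _ (D * #H) fun b hb => ?_).trans ?_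
      · obtain ⟨hba, hb⟩ := mem_erase.mp hb
        have hne : (r : ℤ) * (a - b) ≠ 0 :=
          mul_ne_zero (by exact_mod_cast (hpos r hr).ne') (sub_ne_zero.mpr (Ne.symm hba))
        exact (card_mulSubSolutions_le_of_ne_zero ℛ H hne).trans
          (Nat.mul_le_mul_right _ (hD r hr a ha b hb (Ne.symm hba)))
      · rw [smul_eq_mul]
        gcongr
        exact erase_subset a H
  calc #(sextuples ℛ H)
      ≤ ∑ r ∈ ℛ, ∑ a ∈ H, ∑ b ∈ H, #(mulSubSolutions ℛ H (r * (a - b))) := by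
        simpa only [sum_product] using card_sextuples_le_sum ℛ H
    _ ≤ ∑ r ∈ ℛ, ∑ a ∈ H, (#ℛ * #H + #H * (D * #H)) :=
        sum_le_sum fun r hr => sum_le_sum fun a ha => hinner r hr a ha
    _ = #ℛ ^ 2 * #H ^ 2 + #ℛ * #H ^ 3 * D := by
        simp only [sum_const, smul_eq_mul]
        ring

end Counting

theorem card_filter_ne_zero_Icc_floor_le {x : ℝ} (hx : 0 ≤ x) :
    (#((Icc (-⌊x⌋) ⌊x⌋).filter (· ≠ (0 : ℤ))) : ℝ) ≤ 2 * x := by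
  have hL : 0 ≤ ⌊x⌋ := Int.floor_nonneg.mpr hx
  have hcard : (#((Icc (-⌊x⌋) ⌊x⌋).filter (· ≠ (0 : ℤ))) : ℤ) = 2 * ⌊x⌋ := by
    rw [filter_ne', card_erase_of_mem (by simp [hL]), Int.card_Icc]
    omega
  have hcard' : (#((Icc (-⌊x⌋) ⌊x⌋).filter (· ≠ (0 : ℤ))) : ℝ) = 2 * ⌊x⌋ := by
    exact_mod_cast hcard
  rw [hcard']
  linarith [Int.floor_le x]

theorem natAbs_mul_sub_le {x R : ℝ} {r : ℕ} {a b : ℤ} (hr : (r : ℝ) ≤ R)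
    (ha : a ∈ Icc (-⌊x⌋) ⌊x⌋) (hb : b ∈ Icc (-⌊x⌋) ⌊x⌋) :
    ((r * (a - b)).natAbs : ℝ) ≤ 2 * R * x := by
  rw [mem_Icc] at ha hb
  have hab : |(a : ℝ) - b| ≤ 2 * x := by
    have h : |a - b| ≤ 2 * ⌊x⌋ := abs_le.mpr ⟨by omega, by omega⟩
    have h' : |(a : ℝ) - b| ≤ 2 * ⌊x⌋ := by exact_mod_cast h
    linarith [Int.floor_le x]
  calc ((r * (a - b)).natAbs : ℝ) = r * |(a : ℝ) - b| := by
        rw [Nat.cast_natAbs]; push_cast; rw [abs_mul, Nat.abs_cast]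
    _ ≤ R * (2 * x) := mul_le_mul hr hab (abs_nonneg _) ((Nat.cast_nonneg r).trans hr)
    _ = 2 * R * x := by ring

theorem sextuple_count_general (μ R : ℝ) (hμ0 : 0 < μ)
    (ℛ : Finset ℕ) (hpos : ∀ r ∈ ℛ, 0 < r) (hle : ∀ r ∈ ℛ, (r : ℝ) ≤ R) :
    (((ℛ ×ˢ ℛ ×ˢ ((Finset.Icc (-⌊1/μ⌋) ⌊1/μ⌋).filter (· ≠ (0 : ℤ))) ×ˢ
        ((Finset.Icc (-⌊1/μ⌋) ⌊1/μ⌋).filter (· ≠ (0 : ℤ))) ×ˢ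
        ((Finset.Icc (-⌊1/μ⌋) ⌊1/μ⌋).filter (· ≠ (0 : ℤ))) ×ˢ
        ((Finset.Icc (-⌊1/μ⌋) ⌊1/μ⌋).filter (· ≠ (0 : ℤ)))).filter
      (fun q : ℕ × ℕ × ℤ × ℤ × ℤ × ℤ =>
        (q.2.1 : ℤ) * (q.2.2.1 - q.2.2.2.2.1) = (q.1 : ℤ) * (q.2.2.2.1 - q.2.2.2.2.2))).card : ℝ)
      ≤ (ℛ.card : ℝ) ^ 2 * (2 / μ) ^ 2 +
        (ℛ.card : ℝ) * (2 / μ) ^ 3 *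
          (((Finset.Icc 1 ⌊2 * R / μ⌋₊).sup fun m => m.divisors.card : ℕ) : ℝ) ^ 2 := by
  set H := (Icc (-⌊1/μ⌋) ⌊1/μ⌋).filter (· ≠ (0 : ℤ))
  set D := (Icc 1 ⌊2 * R / μ⌋₊).sup fun m => m.divisors.card
  have hH : (#H : ℝ) ≤ 2 / μ := by
    simpa only [mul_one_div] using card_filter_ne_zero_Icc_floor_le (x := 1 / μ) (by positivity)
  have hD : ∀ r ∈ ℛ, ∀ a ∈ H, ∀ b ∈ H, a ≠ b → #((r * (a - b)).natAbs.divisors) ≤ D := by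
    intro r hr a ha b hb hab
    refine le_sup (f := fun m : ℕ => #m.divisors) (mem_Icc.mpr ⟨?_, Nat.le_floor ?_⟩)
    · exact Int.natAbs_pos.mpr
        (mul_ne_zero (by exact_mod_cast (hpos r hr).ne') (sub_ne_zero.mpr hab))
    · simpa only [mul_one_div] using
        natAbs_mul_sub_le (hle r hr) (mem_filter.mp ha).1 (mem_filter.mp hb).1
  have hcount : (#(sextuples ℛ H) : ℝ) ≤ #ℛ ^ 2 * #H ^ 2 + #ℛ * #H ^ 3 * D := by
    exact_mod_cast card_sextuples_le ℛ H hpos D hD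
  refine hcount.trans ?_
  have hDD : (D : ℝ) ≤ (D : ℝ) ^ 2 := by exact_mod_cast Nat.le_self_pow two_ne_zero D
  gcongr

/-- Counting sextuples `(r₁,r₂,h₁,h₂,h₃,h₄)` with `rᵢ ∈ ℛ`, `hᵢ` nonzero,
`|hᵢ| ≤ 1/μ` and `r₂(h₁−h₃) = r₁(h₂−h₄)`: at most `(#ℛ)²(2/μ)²` diagonal
solutions plus `#ℛ(2/μ)³ max_{m ≤ 2R/μ} d(m)²` off-diagonal ones. -/
theorem sextuple_count (μ R : ℝ) (hμ0 : 0 < μ) (hμ1 : μ ≤ 1) (hR : 1 ≤ R)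
    (ℛ : Finset ℕ) (hpos : ∀ r ∈ ℛ, 0 < r) (hle : ∀ r ∈ ℛ, (r : ℝ) ≤ R) :
    (((ℛ ×ˢ ℛ ×ˢ ((Finset.Icc (-⌊1/μ⌋) ⌊1/μ⌋).filter (· ≠ (0 : ℤ))) ×ˢ
        ((Finset.Icc (-⌊1/μ⌋) ⌊1/μ⌋).filter (· ≠ (0 : ℤ))) ×ˢ
        ((Finset.Icc (-⌊1/μ⌋) ⌊1/μ⌋).filter (· ≠ (0 : ℤ))) ×ˢ
        ((Finset.Icc (-⌊1/μ⌋) ⌊1/μ⌋).filter (· ≠ (0 : ℤ)))).filter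
      (fun q : ℕ × ℕ × ℤ × ℤ × ℤ × ℤ =>
        (q.2.1 : ℤ) * (q.2.2.1 - q.2.2.2.2.1) = (q.1 : ℤ) * (q.2.2.2.1 - q.2.2.2.2.2))).card : ℝ)
      ≤ (ℛ.card : ℝ) ^ 2 * (2 / μ) ^ 2 +
        (ℛ.card : ℝ) * (2 / μ) ^ 3 *
          (((Finset.Icc 1 ⌊2 * R / μ⌋₊).sup fun m => m.divisors.card : ℕ) : ℝ) ^ 2 :=
  sextuple_count_general μ R hμ0 ℛ hpos hle
end
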